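/- arXiv:0912.0667 — 4 statements merged into one kernel-verified Lean document; each statement's English description precedes it below -/
import Mathlib

section
/- If a group G has exactly two non-nilpotent subgroups (necessarily G itself and some K < G), then K is a maximal subgroup of G and K is normal in G, and K is a minimal non-nilpotent group (K is not nilpotent but every proper subgroup of K is nilpotent). -/
/-! Non-nilpotency passes to overgroups and to isomorphic images, so the unique proper
non-nilpotent subgroup is invariant under automorphisms and lies below no other proper
subgroup, and nothing strictly below it can be non-nilpotent. -/

/-- `M(G) = {H ≤ G : H not nilpotent}` has exactly the two elements `⊤` and `K`. -/
def ExactlyTwoNonNilpotent {G : Type*} [Group G] (K : Subgroup G) : Prop :=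
  ¬ Group.IsNilpotent G ∧ K < ⊤ ∧ ¬ Group.IsNilpotent ↥K ∧
    ∀ H : Subgroup G, ¬ Group.IsNilpotent ↥H → H = ⊤ ∨ H = K

namespace Subgroup

variable {G N : Type*} [Group G] [Group N]

theorem not_isNilpotent_of_le {H K : Subgroup G} (hHK : H ≤ K)
    (hH : ¬ Group.IsNilpotent H) : ¬ Group.IsNilpotent K :=
  fun _ => hH (Group.nilpotent_of_mulEquiv (subgroupOfEquivOfLe hHK))

theorem not_isNilpotent_map {H : Subgroup G} {f : G →* N} (hf : Function.Injective f)
    (hH : ¬ Group.IsNilpotent H) : ¬ Group.IsNilpotent (H.map f) :=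
  fun _ => hH (Group.nilpotent_of_mulEquiv (H.equivMapOfInjective f hf).symm)

end Subgroup

namespace ExactlyTwoNonNilpotent

variable {G : Type*} [Group G] {K : Subgroup G}

theorem eq_of_ne_top (h : ExactlyTwoNonNilpotent K) {H : Subgroup G} (hH : H ≠ ⊤)
    (hHnn : ¬ Group.IsNilpotent H) : H = K :=
  (h.2.2.2 H hHnn).resolve_left hH

theorem isCoatom (h : ExactlyTwoNonNilpotent K) : IsCoatom K := by
  refine ⟨h.2.1.ne, fun H hKH => ?_⟩
  by_contra hH
  exact hKH.ne (h.eq_of_ne_top hH (Subgroup.not_isNilpotent_of_le hKH.le h.2.2.1)).symm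

theorem characteristic (h : ExactlyTwoNonNilpotent K) : K.Characteristic := by
  refine Subgroup.characteristic_iff_map_eq.mpr fun ϕ => h.eq_of_ne_top ?_ ?_
  · rw [← Subgroup.map_top_of_surjective ϕ.toMonoidHom ϕ.surjective]
    exact (Subgroup.map_injective ϕ.injective).ne h.2.1.ne
  · exact Subgroup.not_isNilpotent_map ϕ.injective h.2.2.1

theorem isNilpotent_of_lt_top (h : ExactlyTwoNonNilpotent K) {L : Subgroup K} (hL : L < ⊤) :
    Group.IsNilpotent L := by
  have hLK : L.map K.subtype < K :=
    (Subgroup.map_subtype_lt_map_subtype.mpr hL).trans_eq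
      (by rw [← MonoidHom.range_eq_map, K.range_subtype])
  by_contra hLnn
  exact hLK.ne (h.eq_of_ne_top (hLK.trans h.2.1).ne
    (Subgroup.not_isNilpotent_map K.subtype_injective hLnn))

end ExactlyTwoNonNilpotent

/-- If `G` has exactly two non-nilpotent subgroups `G` and `K`, then `K` is a maximal
subgroup of `G`, `K` is normal in `G`, and `K` is a minimal non-nilpotent group. -/
theorem stmt0 {G : Type*} [Group G] (K : Subgroup G) (h : ExactlyTwoNonNilpotent K) :
    IsCoatom K ∧ K.Normal ∧ ¬ Group.IsNilpotent ↥K ∧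
      ∀ L : Subgroup ↥K, L < ⊤ → Group.IsNilpotent ↥L :=
  have := h.characteristic
  ⟨h.isCoatom, inferInstance, h.2.2.1, fun _ => h.isNilpotent_of_lt_top⟩
end

section
/- If a group G has exactly two non-nilpotent subgroups G and K, then the quotient G/K has prime order and the commutator subgroup G' is contained in K. -/
/-!
A subgroup containing the non-nilpotent `K` is itself non-nilpotent, hence equals `K` or `G`;
so `K` is maximal and, by the correspondence theorem, `G ⧸ K` has no subgroups other than `1`
and itself. Such a group is generated by each of its nontrivial elements, hence is cyclic of
prime order; being abelian, it forces `G' ≤ K`.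
-/

theorem Subgroup.isNilpotent_of_le {G : Type*} [Group G] {K H : Subgroup G} (hKH : K ≤ H)
    [Group.IsNilpotent H] : Group.IsNilpotent K :=
  Group.nilpotent_of_mulEquiv (Subgroup.subgroupOfEquivOfLe hKH)

theorem ExactlyTwoNonNilpotent.isCoatom_s1 {G : Type*} [Group G] {K : Subgroup G}
    (h : ExactlyTwoNonNilpotent K) : IsCoatom K := by
  obtain ⟨-, hKlt, hKnn, hmax⟩ := h
  refine ⟨hKlt.ne, fun H hKH ↦ ?_⟩
  exact (hmax H fun _ ↦ hKnn (Subgroup.isNilpotent_of_le hKH.le)).resolve_right hKH.ne'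

theorem QuotientGroup.isSimpleOrder_subgroup_of_isCoatom {G : Type*} [Group G] {K : Subgroup G}
    [K.Normal] (hK : IsCoatom K) : IsSimpleOrder (Subgroup (G ⧸ K)) :=
  (OrderIso.isSimpleOrder_iff (β := Set.Ici K) (comapMk'OrderIso K)).mpr
    (Set.isSimpleOrder_Ici_iff_isCoatom.mpr hK)

section SimpleSubgroupLattice

variable {Q : Type*} [Group Q] [IsSimpleOrder (Subgroup Q)]

theorem isCyclic_of_isSimpleOrder_subgroup : IsCyclic Q := by
  have : Nontrivial Q := Subgroup.nontrivial_iff.mp inferInstance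
  obtain ⟨g, hg⟩ := exists_ne (1 : Q)
  have : Subgroup.zpowers g = ⊤ :=
    (IsSimpleOrder.eq_bot_or_eq_top _).resolve_left (Subgroup.zpowers_ne_bot.2 hg)
  exact ⟨⟨g, (Subgroup.eq_top_iff' _).1 this⟩⟩

theorem prime_card_of_isSimpleOrder_subgroup : (Nat.card Q).Prime := by
  have : IsCyclic Q := isCyclic_of_isSimpleOrder_subgroup
  have : Nontrivial Q := Subgroup.nontrivial_iff.mp inferInstance
  exact Group.is_simple_iff_prime_card.mp ⟨fun H _ ↦ IsSimpleOrder.eq_bot_or_eq_top H⟩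

end SimpleSubgroupLattice

/-- If `G` has exactly two non-nilpotent subgroups `G` and `K` (so `K` is maximal normal),
then `G/K` has prime order and `G' ≤ K`. -/
theorem stmt1 {G : Type*} [Group G] (K : Subgroup G) [K.Normal]
    (h : ExactlyTwoNonNilpotent K) :
    (∃ p : ℕ, p.Prime ∧ Nat.card (G ⧸ K) = p) ∧ commutator G ≤ K := by
  have := QuotientGroup.isSimpleOrder_subgroup_of_isCoatom h.isCoatom_s1
  have : IsCyclic (G ⧸ K) := isCyclic_of_isSimpleOrder_subgroup
  exact ⟨⟨_, prime_card_of_isSimpleOrder_subgroup, rfl⟩,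
    Subgroup.Normal.quotient_commutative_iff_commutator_le.mp inferInstance⟩
end

section
/- If a group G has exactly two non-nilpotent subgroups G and K, and moreover G' is a proper subgroup of K, then G is solvable and the quotient G/G'' is not nilpotent. -/
instance derivedSeriesNormal {G : Type*} [Group G] (n : ℕ) : (derivedSeries G n).Normal :=
  derivedSeries_normal G n

/-!
Since `G' < K`, the subgroup `G'` is neither `G` nor `K`, so it is nilpotent. Then `G` is
solvable, being an extension of the nilpotent group `G'` by the abelian group `G/G'`. If `G/G''`
were nilpotent, P. Hall's criterion for `N = G'` would make `G` nilpotent.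

For Hall's criterion write `N_i` for the lower central series of `N` and `[X, _t G]` for `X`
commutated `t` times with `G`. The three subgroups lemma gives `[N_i, N_j] ≤ N_{i+j+1}` and
`[[A, B], _t G] ≤ ∏_{p+q=t} [[A, _p G], [B, _q G]]`. With `γ_d(G) ≤ N_1`, the second inclusion
turns `γ_s(G) ≤ N_{i+1}` into `γ_{2s+d}(G) ≤ N_{i+2}`, so some `γ_m(G)` lies in `N_c = 1`.
-/

namespace Subgroup

variable {G : Type*} [Group G]

theorem commutator_le_iff_map_mk'_eq_bot (N : Subgroup G) [N.Normal] {H₁ H₂ : Subgroup G} :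
    ⁅H₁, H₂⁆ ≤ N ↔ ⁅H₁.map (QuotientGroup.mk' N), H₂.map (QuotientGroup.mk' N)⁆ = ⊥ := by
  rw [← map_commutator, map_eq_bot_iff, QuotientGroup.ker_mk']

theorem commutator_commutator_le_of_rotate {N H₁ H₂ H₃ : Subgroup G} [N.Normal]
    (h1 : ⁅⁅H₂, H₃⁆, H₁⁆ ≤ N) (h2 : ⁅⁅H₃, H₁⁆, H₂⁆ ≤ N) : ⁅⁅H₁, H₂⁆, H₃⁆ ≤ N := by
  rw [commutator_le_iff_map_mk'_eq_bot, map_commutator] at h1 h2 ⊢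
  exact commutator_commutator_eq_bot_of_rotate h1 h2

theorem commutator_sup_left_le {N H₁ H₂ K : Subgroup G} [N.Normal]
    (h1 : ⁅H₁, K⁆ ≤ N) (h2 : ⁅H₂, K⁆ ≤ N) : ⁅H₁ ⊔ H₂, K⁆ ≤ N := by
  rw [commutator_le_iff_map_mk'_eq_bot, commutator_eq_bot_iff_le_centralizer] at h1 h2 ⊢
  rw [map_sup]
  exact sup_le h1 h2

theorem commutator_lowerCentralSeries_le (N : Subgroup G) [N.Normal] (i j : ℕ) :
    ⁅N.lowerCentralSeries i, N.lowerCentralSeries j⁆ ≤ N.lowerCentralSeries (i + j + 1) := by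
  induction j generalizing i with
  | zero => exact le_rfl
  | succ j ih =>
    rw [lowerCentralSeries_succ N j, commutator_comm]
    apply commutator_commutator_le_of_rotate
    · rw [commutator_comm N, ← lowerCentralSeries_succ]
      convert ih (i + 1) using 2
      omega
    · exact commutator_mono (ih i) le_rfl

def iterCommutatorTop (X : Subgroup G) : ℕ → Subgroup G
  | 0 => X
  | n + 1 => ⁅iterCommutatorTop X n, ⊤⁆

section iterCommutatorTop

variable (X Y : Subgroup G) (m n : ℕ)

@[simp] theorem iterCommutatorTop_zero : X.iterCommutatorTop 0 = X := rfl

@[simp] theorem iterCommutatorTop_succ :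
    X.iterCommutatorTop (n + 1) = ⁅X.iterCommutatorTop n, ⊤⁆ := rfl

theorem iterCommutatorTop_add :
    X.iterCommutatorTop (m + n) = (X.iterCommutatorTop m).iterCommutatorTop n := by
  induction n with
  | zero => rfl
  | succ n ih => rw [← Nat.add_assoc, iterCommutatorTop_succ, ih, iterCommutatorTop_succ]

theorem iterCommutatorTop_succ' :
    X.iterCommutatorTop (n + 1) = (⁅X, ⊤⁆ : Subgroup G).iterCommutatorTop n := by
  rw [Nat.add_comm, iterCommutatorTop_add]
  rfl

theorem top_iterCommutatorTop :
    (⊤ : Subgroup G).iterCommutatorTop n = lowerCentralSeries ⊤ n := by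
  induction n with
  | zero => rfl
  | succ n ih => rw [iterCommutatorTop_succ, ih, lowerCentralSeries_succ]

theorem lowerCentralSeries_iterCommutatorTop :
    (lowerCentralSeries ⊤ m).iterCommutatorTop n =
      lowerCentralSeries (⊤ : Subgroup G) (m + n) := by
  rw [← top_iterCommutatorTop, ← top_iterCommutatorTop, iterCommutatorTop_add]

variable {X Y} in
theorem iterCommutatorTop_mono (h : X ≤ Y) : X.iterCommutatorTop n ≤ Y.iterCommutatorTop n := by
  induction n with
  | zero => exact h
  | succ n ih => exact commutator_mono ih le_rfl

theorem iterCommutatorTop_le_lowerCentralSeries :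
    X.iterCommutatorTop n ≤ lowerCentralSeries ⊤ n := by
  rw [← top_iterCommutatorTop]
  exact iterCommutatorTop_mono n le_top

instance iterCommutatorTop_normal [X.Normal] : (X.iterCommutatorTop n).Normal := by
  induction n with
  | zero => assumption
  | succ n _ => rw [iterCommutatorTop_succ]; infer_instance

theorem iterCommutatorTop_le_self [X.Normal] : X.iterCommutatorTop n ≤ X := by
  induction n with
  | zero => exact le_rfl
  | succ n ih => exact (commutator_le_left _ _).trans ih

theorem iterCommutatorTop_sup_le [X.Normal] [Y.Normal] :
    (X ⊔ Y).iterCommutatorTop n ≤ X.iterCommutatorTop n ⊔ Y.iterCommutatorTop n := by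
  induction n generalizing X Y with
  | zero => exact le_rfl
  | succ n ih =>
    simp only [iterCommutatorTop_succ']
    exact (iterCommutatorTop_mono n (commutator_sup_left_le le_sup_left le_sup_right)).trans
      (ih ⁅X, ⊤⁆ ⁅Y, ⊤⁆)

theorem iterCommutatorTop_commutator_le {A B T : Subgroup G} [A.Normal] [B.Normal] [T.Normal]
    (h : ∀ p q, p + q = n → ⁅A.iterCommutatorTop p, B.iterCommutatorTop q⁆ ≤ T) :
    (⁅A, B⁆ : Subgroup G).iterCommutatorTop n ≤ T := by
  induction n generalizing A B with
  | zero => exact h 0 0 rfl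
  | succ n ih =>
    have three_subgroups : ⁅⁅A, B⁆, ⊤⁆ ≤ ⁅⁅A, ⊤⁆, B⁆ ⊔ ⁅⁅B, ⊤⁆, A⁆ :=
      commutator_commutator_le_of_rotate le_sup_right
        (by rw [commutator_comm ⊤ A]; exact le_sup_left)
    have hA : (⁅⁅A, ⊤⁆, B⁆ : Subgroup G).iterCommutatorTop n ≤ T := ih fun p q hpq => by
      rw [← iterCommutatorTop_succ']
      exact h (p + 1) q (by omega)
    have hB : (⁅⁅B, ⊤⁆, A⁆ : Subgroup G).iterCommutatorTop n ≤ T := ih fun p q hpq => by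
      rw [← iterCommutatorTop_succ', commutator_comm]
      exact h q (p + 1) (by omega)
    rw [iterCommutatorTop_succ']
    exact (iterCommutatorTop_mono n three_subgroups).trans
      ((iterCommutatorTop_sup_le _ _ n).trans (sup_le hA hB))

end iterCommutatorTop

theorem exists_lowerCentralSeries_le_of_isNilpotent_quotient {H : Subgroup G} [H.Normal]
    (h : Group.IsNilpotent (G ⧸ H)) : ∃ n, lowerCentralSeries (⊤ : Subgroup G) n ≤ H := by
  obtain ⟨n, hn⟩ := nilpotent_iff_lowerCentralSeries.mp h
  refine ⟨n, ?_⟩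
  rw [← QuotientGroup.ker_mk' H, ← map_eq_bot_iff, map_lowerCentralSeries,
    map_top_of_surjective _ (QuotientGroup.mk'_surjective H), hn]

theorem exists_lowerCentralSeries_le_lowerCentralSeries {N : Subgroup G} [N.Normal] {d : ℕ}
    (hd : lowerCentralSeries ⊤ d ≤ ⁅N, N⁆) (i : ℕ) :
    ∃ m, lowerCentralSeries ⊤ m ≤ N.lowerCentralSeries (i + 1) := by
  induction i with
  | zero => exact ⟨d, hd⟩
  | succ i ih =>
    obtain ⟨s, hs⟩ := ih
    refine ⟨s + (s + d), ?_⟩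
    rw [← lowerCentralSeries_iterCommutatorTop]
    refine (iterCommutatorTop_mono _ hs).trans
      (iterCommutatorTop_commutator_le (A := N.lowerCentralSeries i) (B := N) _ fun p q hpq => ?_)
    rcases le_or_gt s p with hp | hp
    · calc ⁅(N.lowerCentralSeries i).iterCommutatorTop p, N.iterCommutatorTop q⁆
          ≤ ⁅N.lowerCentralSeries (i + 1), N⁆ :=
            commutator_mono ((iterCommutatorTop_le_lowerCentralSeries _ p).trans
              ((lowerCentralSeries_antitone _ hp).trans hs)) (iterCommutatorTop_le_self N q)
        _ = N.lowerCentralSeries (i + 1 + 1) := rfl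
    · calc ⁅(N.lowerCentralSeries i).iterCommutatorTop p, N.iterCommutatorTop q⁆
          ≤ ⁅N.lowerCentralSeries i, N.lowerCentralSeries 1⁆ :=
            commutator_mono (iterCommutatorTop_le_self _ p)
              ((iterCommutatorTop_le_lowerCentralSeries N q).trans
                ((lowerCentralSeries_antitone _ (by omega : d ≤ q)).trans hd))
        _ ≤ N.lowerCentralSeries (i + 1 + 1) := commutator_lowerCentralSeries_le N i 1

theorem isNilpotent_of_isNilpotent_quotient_commutator (N : Subgroup G) [N.Normal]
    (hN : Group.IsNilpotent N) (hQ : Group.IsNilpotent (G ⧸ ⁅N, N⁆)) : Group.IsNilpotent G := by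
  obtain ⟨d, hd⟩ := exists_lowerCentralSeries_le_of_isNilpotent_quotient hQ
  obtain ⟨c, hc⟩ := (isNilpotent_iff_lowerCentralSeries N).mp hN
  obtain ⟨m, hm⟩ := exists_lowerCentralSeries_le_lowerCentralSeries hd c
  refine nilpotent_iff_lowerCentralSeries.mpr ⟨m, le_bot_iff.mp (hm.trans ?_)⟩
  exact (N.lowerCentralSeries_antitone c.le_succ).trans hc.le

end Subgroup

/-- If `G` has exactly two non-nilpotent subgroups `G` and `K`, and `G' < K`, then `G` is
solvable and `G/G''` is not nilpotent. -/
theorem stmt3 {G : Type*} [Group G] (K : Subgroup G) (h : ExactlyTwoNonNilpotent K)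
    (hK : commutator G < K) :
    IsSolvable G ∧ ¬ Group.IsNilpotent (G ⧸ derivedSeries G 2) := by
  obtain ⟨hG, -, -, hNonNilpotent⟩ := h
  have hG' : Group.IsNilpotent (commutator G) := by
    by_contra hnil
    rcases hNonNilpotent _ hnil with htop | hKeq
    · exact not_top_lt (htop ▸ hK)
    · exact hK.ne hKeq
  refine ⟨Group.isSolvable_of_ker_le_range (commutator G).subtype Abelianization.of ?_,
    fun hQ => hG (Subgroup.isNilpotent_of_isNilpotent_quotient_commutator _ hG' hQ)⟩
  rw [Abelianization.ker_of, Subgroup.range_subtype]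
end

section
/- Let G be a group with exactly two non-nilpotent subgroups G and K (with G' < K), and let M ≠ K be a maximal normal subgroup of G. Then the commutator [K, M] is nontrivial. -/
open Pointwise

section

variable {G : Type*} [Group G]

theorem Group.isNilpotent_quotient_of_isNilpotent_commutator [IsNilpotent (commutator G)]
    (M : Subgroup G) [M.Normal] (hM : ∀ N : Subgroup G, N.Normal → M < N → N = ⊤) :
    IsNilpotent (G ⧸ M) := by
  by_cases hle : commutator G ≤ M
  · exact ⟨1, Subgroup.upperCentralSeries_one_eq_top_iff.mpr
      (Subgroup.Normal.quotient_commutative_iff_commutator_le.mpr hle)⟩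
  · have hsup : commutator G ⊔ M = ⊤ := hM _ inferInstance (right_lt_sup.mpr hle)
    refine nilpotent_of_surjective ((QuotientGroup.mk' M).comp (commutator G).subtype) ?_
    rintro ⟨g⟩
    obtain ⟨d, hd, m, hm, rfl⟩ : g ∈ (commutator G : Set G) * M := by
      rw [← Subgroup.mul_normal, hsup]
      trivial
    exact ⟨⟨d, hd⟩, QuotientGroup.eq.mpr (by simpa using hm)⟩

theorem Subgroup.isNilpotent_of_commutator_eq_bot {K M : Subgroup G} [M.Normal]
    [Group.IsNilpotent (G ⧸ M)] (h : ⁅K, M⁆ = ⊥) : Group.IsNilpotent K := by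
  refine isNilpotent_of_ker_le_center ((QuotientGroup.mk' M).comp K.subtype) fun k hk => ?_
  have hkM : (k : G) ∈ M := by simpa using hk
  exact mem_center_iff.mpr fun x =>
    Subtype.ext (commutator_eq_bot_iff_le_centralizer.mp h x.2 k hkM).symm

end

theorem stmt6_general {G : Type*} [Group G] (K M : Subgroup G) (h : ExactlyTwoNonNilpotent K)
    (hK : commutator G < K) (hMnorm : M.Normal)
    (hMmax : ∀ N : Subgroup G, N.Normal → M < N → N = ⊤) :
    ⁅K, M⁆ ≠ (⊥ : Subgroup G) := by
  obtain ⟨-, hKtop, hKnil, hclass⟩ := h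
  have : Group.IsNilpotent (commutator G) := by
    by_contra hnil
    rcases hclass _ hnil with htop | hKeq
    · exact (hK.trans hKtop).ne htop
    · exact hK.ne hKeq
  have := Group.isNilpotent_quotient_of_isNilpotent_commutator M hMmax
  exact fun hbot => hKnil (Subgroup.isNilpotent_of_commutator_eq_bot hbot)

/-- If `G` has exactly two non-nilpotent subgroups `G` and `K` (with `G' < K`), and `M ≠ K`
is a maximal normal subgroup of `G`, then `[K, M] ≠ 1`. -/
theorem stmt6 {G : Type*} [Group G] (K M : Subgroup G) (h : ExactlyTwoNonNilpotent K)
    (hK : commutator G < K) (hMnorm : M.Normal) (hMprop : M < ⊤)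
    (hMmax : ∀ N : Subgroup G, N.Normal → M < N → N = ⊤) (hMK : M ≠ K) :
    ⁅K, M⁆ ≠ (⊥ : Subgroup G) :=
  stmt6_general K M h hK hMnorm hMmax
end
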